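/- arXiv:2508.06745 — 5 statements merged into one kernel-verified Lean document; each statement's English description precedes it below -/
import Mathlib

section
/- Let (M, P_M) be a Nijenhuis bimodule over a Nijenhuis algebra (A, P_A). Then the deformed actions x ▷ m := P_A(x)m + xP_M(m) − P_M(xm) and m ◁ x := P_M(m)x + mP_A(x) − P_M(mx) make M a bimodule over the deformed associative algebra (A, ·_P); that is, for all x, y ∈ A and m ∈ M: (x ·_P y) ▷ m = x ▷ (y ▷ m), m ◁ (x ·_P y) = (m ◁ x) ◁ y, and (x ▷ m) ◁ y = x ▷ (m ◁ y). -/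
/-- The Nijenhuis operator condition on an associative algebra. -/
def IsNijenhuis {A : Type*} [Ring A] (P : A → A) : Prop :=
  ∀ x y : A, P x * P y = P (P x * y + x * P y - P (x * y))

/-- The deformed product `x ·_P y := P x * y + x * P y - P (x * y)`. -/
def dmul {A : Type*} [Ring A] (P : A → A) (x y : A) : A :=
  P x * y + x * P y - P (x * y)

/-- A bimodule structure over an associative algebra `A`, with `l x m = x·m`
and `r x m = m·x`. -/
structure BimoduleStr (k A M : Type*) [Field k] [Ring A] [Algebra k A]
    [AddCommGroup M] [Module k M] where
  l : A →ₗ[k] M →ₗ[k] M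
  r : A →ₗ[k] M →ₗ[k] M
  l_mul : ∀ (x y : A) (m : M), l (x * y) m = l x (l y m)
  r_mul : ∀ (x y : A) (m : M), r (x * y) m = r y (r x m)
  lr : ∀ (x y : A) (m : M), r y (l x m) = l x (r y m)

def actL {k A M : Type*} [Field k] [Ring A] [Algebra k A] [AddCommGroup M] [Module k M]
    (ρ : BimoduleStr k A M) : A → M → M := fun a m => ρ.l a m

def actR {k A M : Type*} [Field k] [Ring A] [Algebra k A] [AddCommGroup M] [Module k M]
    (ρ : BimoduleStr k A M) : A → M → M := fun a m => ρ.r a m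

/-- `(M, PM)` is a Nijenhuis bimodule over the Nijenhuis algebra `(A, P)`. -/
def IsNijBimodule {k A M : Type*} [Field k] [Ring A] [Algebra k A]
    [AddCommGroup M] [Module k M] (P : A →ₗ[k] A) (ρ : BimoduleStr k A M)
    (PM : M →ₗ[k] M) : Prop :=
  (∀ (x : A) (m : M), ρ.l (P x) (PM m) = PM (ρ.l (P x) m + ρ.l x (PM m) - PM (ρ.l x m))) ∧
  (∀ (x : A) (m : M), ρ.r (P x) (PM m) = PM (ρ.r x (PM m) + ρ.r (P x) m - PM (ρ.r x m)))

/-- The deformed left action `x ▷ m := P(x)·m + x·PM(m) - PM(x·m)`. -/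
def dL {A M : Type*} [AddCommGroup M] (P : A → A) (PM : M → M)
    (l : A → M → M) (x : A) (m : M) : M :=
  l (P x) m + l x (PM m) - PM (l x m)

/-- The deformed right action `m ◁ x := PM(m)·x + m·P(x) - PM(m·x)`. -/
def dR {A M : Type*} [AddCommGroup M] (P : A → A) (PM : M → M)
    (r : A → M → M) (x : A) (m : M) : M :=
  r x (PM m) + r (P x) m - PM (r x m)

/-- the deformed actions make `M` a bimodule over the deformed
associative algebra `(A, ·_P)`. -/
theorem deformed_actions_bimodule {k A M : Type*} [Field k] [Ring A] [Algebra k A]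
    [AddCommGroup M] [Module k M]
    (P : A →ₗ[k] A) (hP : IsNijenhuis (⇑P))
    (ρ : BimoduleStr k A M) (PM : M →ₗ[k] M)
    (hMod : IsNijBimodule P ρ PM) :
    (∀ (x y : A) (m : M),
        dL (⇑P) (⇑PM) (actL ρ) (dmul (⇑P) x y) m
          = dL (⇑P) (⇑PM) (actL ρ) x (dL (⇑P) (⇑PM) (actL ρ) y m))
    ∧ (∀ (x y : A) (m : M),
        dR (⇑P) (⇑PM) (actR ρ) (dmul (⇑P) x y) m
          = dR (⇑P) (⇑PM) (actR ρ) y (dR (⇑P) (⇑PM) (actR ρ) x m))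
    ∧ (∀ (x y : A) (m : M),
        dR (⇑P) (⇑PM) (actR ρ) y (dL (⇑P) (⇑PM) (actL ρ) x m)
          = dL (⇑P) (⇑PM) (actL ρ) x (dR (⇑P) (⇑PM) (actR ρ) y m)) := by
  obtain ⟨h1, h2⟩ := hMod
  simp only [IsNijenhuis] at hP
  refine ⟨fun x y m => ?_, fun x y m => ?_, fun x y m => ?_⟩
  · simp only [dL, dR, dmul, actL, actR, ← hP, map_add, map_sub, LinearMap.add_apply,
      LinearMap.sub_apply, ρ.l_mul, ρ.r_mul, ρ.lr, h1, h2]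
    abel
  · simp only [dL, dR, dmul, actL, actR, ← hP, map_add, map_sub, LinearMap.add_apply,
      LinearMap.sub_apply, ρ.l_mul, ρ.r_mul, ρ.lr, h1, h2]
    abel
  · simp only [dL, dR, actL, actR, map_add, map_sub, LinearMap.add_apply,
      LinearMap.sub_apply, ρ.lr, h1, h2]
    rw [← ρ.lr (P x) y (PM m), h1]
    simp only [map_add, map_sub]
    abel
end

section
/- Let φ : (A, P_A) → (B, P_B) be a morphism of Nijenhuis algebras and ⟨(M,P_M),(N,P_N),ψ⟩ a Nijenhuis φ-bimodule. Fix n ≥ 2. If the Nijenhuis algebra cohomology groups H^n_NjA(A, M), H^n_NjA(B, N) and H^{n−1}_NjA(A, N) all vanish (where N is regarded as a Nijenhuis bimodule over (A, P_A) via φ), then the n-th cohomology group H^n_NjM(φ, ψ) of the Nijenhuis algebra morphism vanishes; equivalently, every n-cocycle of the complex (C^•_NjM(φ,ψ), D^•) is an n-coboundary. -/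
/-- Auxiliary map merging two adjacent slots by the multiplication. -/
def mergeAt {A : Type*} (mul : A → A → A) {n : ℕ} (i : Fin n) (x : Fin (n+1) → A)
    (j : Fin n) : A :=
  if (j : ℕ) < (i : ℕ) then x j.castSucc
  else if (j : ℕ) = (i : ℕ) then mul (x j.castSucc) (x j.succ)
  else x j.succ

/-- The Hochschild differential of an `n`-cochain with coefficients in a bimodule
given by its left action `l` and right action `r`. -/
def hochd {A M : Type*} [AddCommGroup M] (mul : A → A → A) (l r : A → M → M)
    (n : ℕ) (f : (Fin n → A) → M) : (Fin (n+1) → A) → M :=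
  fun x =>
    l (x 0) (f fun j => x j.succ)
      + ∑ i : Fin n, ((-1 : ℤ) ^ ((i : ℕ) + 1)) • f (mergeAt mul i x)
      + ((-1 : ℤ) ^ (n + 1)) • r (x (Fin.last n)) (f fun j => x j.castSucc)

/-- The map `Φⁿ(f)(x₁,…,xₙ) = Σ_{k} Σ_{i₁<…<i_k} (-1)^{n-k} PM^{n-k}
(f(x₁,…,P x_{i₁},…,P x_{i_k},…,xₙ))`, the sum running over subsets `S ⊆ {1,…,n}`. -/
def Phi {A M : Type*} [AddCommGroup M] (P : A → A) (PM : M → M) (n : ℕ)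
    (f : (Fin n → A) → M) : (Fin n → A) → M :=
  fun x => ∑ S : Finset (Fin n),
    ((-1 : ℤ) ^ (n - S.card)) • (PM^[n - S.card])
      (f fun i => if i ∈ S then P (x i) else x i)

/-- The deformed multiplication associated to a (raw) multiplication and an operator. -/
def dmulG {A : Type*} [AddCommGroup A] (mul : A → A → A) (P : A → A) (x y : A) : A :=
  mul (P x) y + mul x (P y) - P (mul x y)

/-- The differential `δ_NjO` of the cochain complex of a Nijenhuis operator:
`δ_NjO(f) = - PM ∘ δ(f) + ∂(f)` where `∂` is the Hochschild differential of the
deformed algebra with coefficients in the deformed bimodule. -/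
def njod {A M : Type*} [AddCommGroup A] [AddCommGroup M]
    (mul : A → A → A) (P : A → A) (l r : A → M → M) (PM : M → M)
    (n : ℕ) (f : (Fin n → A) → M) : (Fin (n+1) → A) → M :=
  fun x => - PM (hochd mul l r n f x)
    + hochd (dmulG mul P) (dL P PM l) (dR P PM r) n f x

/-- The differential of the cochain complex of a Nijenhuis algebra,
`δ_NjA(f, g) = (δ(f), -δ_NjO(g) - Φ(f))`, in degree `m+1`. -/
def DNjA {A M : Type*} [AddCommGroup A] [AddCommGroup M]
    (mul : A → A → A) (P : A → A) (l r : A → M → M) (PM : M → M) (m : ℕ)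
    (c : ((Fin (m+1) → A) → M) × ((Fin m → A) → M)) :
    ((Fin (m+2) → A) → M) × ((Fin (m+1) → A) → M) :=
  ( hochd mul l r (m+1) c.1,
    fun x => - njod mul P l r PM m c.2 x - Phi P PM (m+1) c.1 x )

/-- The differential `D` of the cochain complex of a Nijenhuis algebra morphism,
in degree `m+2`. -/
def DNjM {A B M N : Type*} [Ring A] [Ring B] [AddCommGroup M] [AddCommGroup N]
    (PA : A → A) (PB : B → B) (PM : M → M) (PN : N → N)
    (lM rM : A → M → M) (lN rN : B → N → N)
    (φ : A → B) (ψ : M → N) (m : ℕ)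
    (c : (((Fin (m+2) → A) → M) × ((Fin (m+2) → B) → N) × ((Fin (m+1) → A) → N))
       × (((Fin (m+1) → A) → M) × ((Fin (m+1) → B) → N) × ((Fin m → A) → N))) :
    (((Fin (m+3) → A) → M) × ((Fin (m+3) → B) → N) × ((Fin (m+2) → A) → N))
    × (((Fin (m+2) → A) → M) × ((Fin (m+2) → B) → N) × ((Fin (m+1) → A) → N)) :=
  (( hochd (· * ·) lM rM (m+2) c.1.1,
     hochd (· * ·) lN rN (m+2) c.1.2.1,
     fun x => ψ (c.1.1 x) - c.1.2.1 (fun i => φ (x i))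
       - hochd (· * ·) (fun a nn => lN (φ a) nn) (fun a nn => rN (φ a) nn) (m+1) c.1.2.2 x ),
   ( fun x => njod (· * ·) PA lM rM PM (m+1) c.2.1 x
       + ((-1 : ℤ) ^ (m+2)) • Phi PA PM (m+2) c.1.1 x,
     fun x => njod (· * ·) PB lN rN PN (m+1) c.2.2.1 x
       + ((-1 : ℤ) ^ (m+2)) • Phi PB PN (m+2) c.1.2.1 x,
     fun x => ψ (c.2.1 x) - c.2.2.1 (fun i => φ (x i))
       - njod (· * ·) PA (fun a nn => lN (φ a) nn) (fun a nn => rN (φ a) nn) PN m c.2.2.2 x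
       + ((-1 : ℤ) ^ (m+2)) • Phi PA PN (m+1) c.1.2.2 x ))

/-- The differential `D¹` of the cochain complex of a Nijenhuis algebra morphism
in degree `1`. -/
def D1NjM {A B M N : Type*} [Ring A] [Ring B] [AddCommGroup M] [AddCommGroup N]
    (PA : A → A) (PB : B → B) (PM : M → M) (PN : N → N)
    (lM rM : A → M → M) (lN rN : B → N → N)
    (φ : A → B) (ψ : M → N)
    (c : (((Fin 1 → A) → M) × ((Fin 1 → B) → N) × ((Fin 0 → A) → N))
       × (((Fin 0 → A) → M) × ((Fin 0 → B) → N))) :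
    (((Fin 2 → A) → M) × ((Fin 2 → B) → N) × ((Fin 1 → A) → N))
    × (((Fin 1 → A) → M) × ((Fin 1 → B) → N) × ((Fin 0 → A) → N)) :=
  (( hochd (· * ·) lM rM 1 c.1.1,
     hochd (· * ·) lN rN 1 c.1.2.1,
     fun x => ψ (c.1.1 x) - c.1.2.1 (fun i => φ (x i)) ),
   ( fun x => - Phi PA PM 1 c.1.1 x,
     fun x => - Phi PB PN 1 c.1.2.1 x,
     fun x => ψ (c.2.1 x) - c.2.2 (fun i => φ (x i)) - c.1.2.2 x ))

set_option linter.unusedSectionVars false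
section Helpers

variable {A B M N : Type*} [AddCommGroup M] [AddCommGroup N]

lemma mergeAt_map (φ : A → B) (mulA : A → A → A) (mulB : B → B → B)
    (hm : ∀ x y, φ (mulA x y) = mulB (φ x) (φ y)) {n : ℕ} (i : Fin n) (x : Fin (n+1) → A) :
    mergeAt mulB i (fun j => φ (x j)) = fun j => φ (mergeAt mulA i x j) := by
  funext j; simp only [mergeAt]; split_ifs <;> simp [hm]

lemma hochd_comm (T : M →+ N) (mul : A → A → A) (l r : A → M → M) (l' r' : A → N → N)
    (hl : ∀ a m, T (l a m) = l' a (T m)) (hr : ∀ a m, T (r a m) = r' a (T m))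
    (n : ℕ) (f : (Fin n → A) → M) (x : Fin (n+1) → A) :
    T (hochd mul l r n f x) = hochd mul l' r' n (fun y => T (f y)) x := by
  simp only [hochd, map_add, map_sum, map_zsmul, hl, hr]

lemma hochd_comp (φ : A → B) (mulA : A → A → A) (mulB : B → B → B)
    (hm : ∀ x y, φ (mulA x y) = mulB (φ x) (φ y)) (l r : B → N → N)
    (n : ℕ) (f : (Fin n → B) → N) (x : Fin (n+1) → A) :
    hochd mulB l r n f (fun i => φ (x i)) =
      hochd mulA (fun a => l (φ a)) (fun a => r (φ a)) n (fun y => f (fun i => φ (y i))) x := by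
  simp only [hochd, mergeAt_map φ mulA mulB hm]

lemma hochd_sub (mul : A → A → A) (l r : A → M → M)
    (hl : ∀ a m m', l a (m - m') = l a m - l a m')
    (hr : ∀ a m m', r a (m - m') = r a m - r a m')
    (n : ℕ) (f g : (Fin n → A) → M) (x : Fin (n+1) → A) :
    hochd mul l r n (fun y => f y - g y) x = hochd mul l r n f x - hochd mul l r n g x := by
  simp only [hochd, hl, hr, smul_sub, Finset.sum_sub_distrib]; abel

lemma hochd_zsmul (mul : A → A → A) (l r : A → M → M) (c : ℤ)
    (hl : ∀ a m, l a (c • m) = c • l a m) (hr : ∀ a m, r a (c • m) = c • r a m)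
    (n : ℕ) (f : (Fin n → A) → M) (x : Fin (n+1) → A) :
    hochd mul l r n (fun y => c • f y) x = c • hochd mul l r n f x := by
  simp only [hochd, hl, hr, smul_add, Finset.smul_sum, smul_comm c]

lemma iterate_comm (T : M → N) (PM : M → M) (PN : N → N)
    (hP : ∀ m, T (PM m) = PN (T m)) : ∀ (j : ℕ) (m : M), T (PM^[j] m) = PN^[j] (T m) := by
  intro j
  induction j with
  | zero => intro m; rfl
  | succ j ih =>
      intro m
      rw [Function.iterate_succ_apply, Function.iterate_succ_apply, ih, hP]

lemma iterate_sub (PM : M → M) (h : ∀ a b, PM (a - b) = PM a - PM b) :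
    ∀ (j : ℕ) (a b : M), PM^[j] (a - b) = PM^[j] a - PM^[j] b := by
  intro j
  induction j with
  | zero => intro a b; rfl
  | succ j ih =>
      intro a b
      rw [Function.iterate_succ_apply, Function.iterate_succ_apply,
        Function.iterate_succ_apply, h, ih]

lemma iterate_zsmul (PM : M → M) (c : ℤ) (h : ∀ a, PM (c • a) = c • PM a) :
    ∀ (j : ℕ) (a : M), PM^[j] (c • a) = c • PM^[j] a := by
  intro j
  induction j with
  | zero => intro a; rfl
  | succ j ih =>
      intro a
      rw [Function.iterate_succ_apply, Function.iterate_succ_apply, h, ih]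

lemma Phi_comm {A : Type*} (T : M →+ N) (P : A → A) (PM : M → M) (PN : N → N)
    (hP : ∀ m, T (PM m) = PN (T m)) (n : ℕ) (f : (Fin n → A) → M) (x : Fin n → A) :
    T (Phi P PM n f x) = Phi P PN n (fun y => T (f y)) x := by
  simp only [Phi, map_sum, map_zsmul, iterate_comm T PM PN hP]

lemma Phi_comp (φ : A → B) (PA : A → A) (PB : B → B) (hP : ∀ a, φ (PA a) = PB (φ a))
    (PN : N → N) (n : ℕ) (f : (Fin n → B) → N) (x : Fin n → A) :
    Phi PB PN n f (fun i => φ (x i)) = Phi PA PN n (fun y => f (fun i => φ (y i))) x := by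
  have h : ∀ S : Finset (Fin n), (fun i => if i ∈ S then PB (φ (x i)) else φ (x i))
      = fun i => φ (if i ∈ S then PA (x i) else x i) := by
    intro S; funext i; split_ifs <;> simp [hP]
  simp only [Phi, h]

lemma Phi_sub {A : Type*} (P : A → A) (PM : M → M)
    (hPM : ∀ a b, PM (a - b) = PM a - PM b) (n : ℕ) (f g : (Fin n → A) → M) (x : Fin n → A) :
    Phi P PM n (fun y => f y - g y) x = Phi P PM n f x - Phi P PM n g x := by
  simp only [Phi, iterate_sub PM hPM, smul_sub, Finset.sum_sub_distrib]

lemma Phi_zsmul {A : Type*} (P : A → A) (PM : M → M) (c : ℤ)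
    (h : ∀ a, PM (c • a) = c • PM a) (n : ℕ) (f : (Fin n → A) → M) (x : Fin n → A) :
    Phi P PM n (fun y => c • f y) x = c • Phi P PM n f x := by
  simp only [Phi, iterate_zsmul PM c h, Finset.smul_sum, smul_comm c]

lemma njod_comm [AddCommGroup A] (T : M →+ N) (mul : A → A → A) (P : A → A) (l r : A → M → M)
    (l' r' : A → N → N) (PM : M → M) (PN : N → N)
    (hl : ∀ a m, T (l a m) = l' a (T m)) (hr : ∀ a m, T (r a m) = r' a (T m))
    (hP : ∀ m, T (PM m) = PN (T m))
    (n : ℕ) (f : (Fin n → A) → M) (x : Fin (n+1) → A) :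
    T (njod mul P l r PM n f x) = njod mul P l' r' PN n (fun y => T (f y)) x := by
  have hdl : ∀ a m, T (dL P PM l a m) = dL P PN l' a (T m) := by
    intro a m; simp only [dL, map_add, map_sub, hl, hP]
  have hdr : ∀ a m, T (dR P PM r a m) = dR P PN r' a (T m) := by
    intro a m; simp only [dR, map_add, map_sub, hr, hP]
  simp only [njod, map_add, map_neg, hP, hochd_comm T mul l r l' r' hl hr,
    hochd_comm T (dmulG mul P) (dL P PM l) (dR P PM r) (dL P PN l') (dR P PN r') hdl hdr]

lemma njod_comp [AddCommGroup A] [AddCommGroup B] (φ : A → B) (mulA : A → A → A) (mulB : B → B → B)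
    (hm : ∀ x y, φ (mulA x y) = mulB (φ x) (φ y))
    (PA : A → A) (PB : B → B)
    (hm' : ∀ x y, φ (dmulG mulA PA x y) = dmulG mulB PB (φ x) (φ y))
    (hP : ∀ a, φ (PA a) = PB (φ a))
    (l r : B → N → N) (PN : N → N)
    (n : ℕ) (f : (Fin n → B) → N) (x : Fin (n+1) → A) :
    njod mulB PB l r PN n f (fun i => φ (x i)) =
      njod mulA PA (fun a => l (φ a)) (fun a => r (φ a)) PN n (fun y => f (fun i => φ (y i))) x := by
  have hdl : (fun a => dL PB PN l (φ a)) = dL PA PN (fun a => l (φ a)) := by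
    funext a m; simp only [dL, hP]
  have hdr : (fun a => dR PB PN r (φ a)) = dR PA PN (fun a => r (φ a)) := by
    funext a m; simp only [dR, hP]
  simp only [njod, hochd_comp φ mulA mulB hm l r n f x,
    hochd_comp φ (dmulG mulA PA) (dmulG mulB PB) hm' (dL PB PN l) (dR PB PN r) n f x, hdl, hdr]

lemma njod_sub [AddCommGroup A] (mul : A → A → A) (P : A → A) (l r : A → M → M) (PM : M → M)
    (hl : ∀ a m m', l a (m - m') = l a m - l a m')
    (hr : ∀ a m m', r a (m - m') = r a m - r a m')
    (hPM : ∀ a b, PM (a - b) = PM a - PM b)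
    (n : ℕ) (f g : (Fin n → A) → M) (x : Fin (n+1) → A) :
    njod mul P l r PM n (fun y => f y - g y) x
      = njod mul P l r PM n f x - njod mul P l r PM n g x := by
  have hdl : ∀ a m m', dL P PM l a (m - m') = dL P PM l a m - dL P PM l a m' := by
    intro a m m'; simp only [dL, hl, hPM]; abel
  have hdr : ∀ a m m', dR P PM r a (m - m') = dR P PM r a m - dR P PM r a m' := by
    intro a m m'; simp only [dR, hr, hPM]; abel
  simp only [njod, hochd_sub mul l r hl hr, hochd_sub (dmulG mul P) _ _ hdl hdr, hPM]
  abel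

lemma njod_zsmul [AddCommGroup A] (mul : A → A → A) (P : A → A) (l r : A → M → M) (PM : M → M) (c : ℤ)
    (hl : ∀ a m, l a (c • m) = c • l a m) (hr : ∀ a m, r a (c • m) = c • r a m)
    (hPM : ∀ a, PM (c • a) = c • PM a)
    (n : ℕ) (f : (Fin n → A) → M) (x : Fin (n+1) → A) :
    njod mul P l r PM n (fun y => c • f y) x = c • njod mul P l r PM n f x := by
  have hdl : ∀ a m, dL P PM l a (c • m) = c • dL P PM l a m := by
    intro a m; simp only [dL, hl, hPM, smul_add, smul_sub]
  have hdr : ∀ a m, dR P PM r a (c • m) = c • dR P PM r a m := by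
    intro a m; simp only [dR, hr, hPM, smul_add, smul_sub]
  simp only [njod, hochd_zsmul mul l r c hl hr, hochd_zsmul (dmulG mul P) _ _ c hdl hdr, hPM,
    smul_add, smul_neg]

end Helpers

section SolveHelpers
variable {G : Type*} [AddCommGroup G]

lemma solve1 {a b s : G} (h : -a - b = -s) : a = -b + s := by
  have h2 : a = -(-a - b) - b := by abel
  rw [h2, h]; abel

lemma solve2 {p q a t : G} (h : p - q - a + -t = 0) : a = p - q - t := by
  have h2 : a = (p - q - t) - (p - q - a + -t) := by abel
  rw [h2, h]; abel

lemma solve3 {a b s : G} (h : -a - b = s) : a = -b - s := by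
  have h2 : a = -b - (-a - b) := by abel
  rw [h2, h]

lemma solve4 {a t : G} (h : a + -t = 0) : a = t := by
  have h2 : a = t + (a + -t) := by abel
  rw [h2, h]; abel

lemma solve5 (a b h : G) : a - b - (a - b - h) = h := by abel

end SolveHelpers

/-- if the Nijenhuis-algebra cohomology groups `Hⁿ_NjA(A,M)`,
`Hⁿ_NjA(B,N)` and `H^{n-1}_NjA(A,N)` vanish, then `Hⁿ_NjM(φ,ψ) = 0`, i.e. every
`n`-cocycle of `(C•_NjM(φ,ψ), D)` is an `n`-coboundary (here `n = m+3`). -/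
theorem HNjM_vanishing {k A B M N : Type*} [Field k] [Ring A] [Algebra k A]
    [Ring B] [Algebra k B] [AddCommGroup M] [Module k M] [AddCommGroup N] [Module k N]
    (PA : A →ₗ[k] A) (hA : IsNijenhuis (⇑PA))
    (PB : B →ₗ[k] B) (hB : IsNijenhuis (⇑PB))
    (φ : A →ₐ[k] B) (hφ : ∀ x : A, φ (PA x) = PB (φ x))
    (ρM : BimoduleStr k A M) (PM : M →ₗ[k] M) (hM : IsNijBimodule PA ρM PM)
    (ρN : BimoduleStr k B N) (PN : N →ₗ[k] N) (hN : IsNijBimodule PB ρN PN)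
    (ψ : M →ₗ[k] N)
    (hψl : ∀ (x : A) (m : M), ψ (ρM.l x m) = ρN.l (φ x) (ψ m))
    (hψr : ∀ (x : A) (m : M), ψ (ρM.r x m) = ρN.r (φ x) (ψ m))
    (hψP : ∀ m : M, ψ (PM m) = PN (ψ m))
    (m : ℕ)
    -- vanishing of `H^{m+3}_NjA(A, M)`
    (hAM : ∀ (u1 : MultilinearMap k (fun _ : Fin (m+3) => A) M)
        (u2 : MultilinearMap k (fun _ : Fin (m+2) => A) M),
      DNjA (· * ·) (⇑PA) (actL ρM) (actR ρM) (⇑PM) (m+2) (⇑u1, ⇑u2) = 0 →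
      ∃ (v1 : MultilinearMap k (fun _ : Fin (m+2) => A) M)
        (v2 : MultilinearMap k (fun _ : Fin (m+1) => A) M),
        DNjA (· * ·) (⇑PA) (actL ρM) (actR ρM) (⇑PM) (m+1) (⇑v1, ⇑v2) = (⇑u1, ⇑u2))
    -- vanishing of `H^{m+3}_NjA(B, N)`
    (hBN : ∀ (u1 : MultilinearMap k (fun _ : Fin (m+3) => B) N)
        (u2 : MultilinearMap k (fun _ : Fin (m+2) => B) N),
      DNjA (· * ·) (⇑PB) (actL ρN) (actR ρN) (⇑PN) (m+2) (⇑u1, ⇑u2) = 0 →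
      ∃ (v1 : MultilinearMap k (fun _ : Fin (m+2) => B) N)
        (v2 : MultilinearMap k (fun _ : Fin (m+1) => B) N),
        DNjA (· * ·) (⇑PB) (actL ρN) (actR ρN) (⇑PN) (m+1) (⇑v1, ⇑v2) = (⇑u1, ⇑u2))
    -- vanishing of `H^{m+2}_NjA(A, N)` (`N` regarded as an `A`-bimodule via `φ`)
    (hAN : ∀ (u1 : MultilinearMap k (fun _ : Fin (m+2) => A) N)
        (u2 : MultilinearMap k (fun _ : Fin (m+1) => A) N),
      DNjA (· * ·) (⇑PA) (fun a nn => ρN.l (φ a) nn) (fun a nn => ρN.r (φ a) nn)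
          (⇑PN) (m+1) (⇑u1, ⇑u2) = 0 →
      ∃ (v1 : MultilinearMap k (fun _ : Fin (m+1) => A) N)
        (v2 : MultilinearMap k (fun _ : Fin m => A) N),
        DNjA (· * ·) (⇑PA) (fun a nn => ρN.l (φ a) nn) (fun a nn => ρN.r (φ a) nn)
          (⇑PN) m (⇑v1, ⇑v2) = (⇑u1, ⇑u2))
    -- an `(m+3)`-cocycle of `C•_NjM(φ, ψ)`
    (f1 : MultilinearMap k (fun _ : Fin (m+3) => A) M)
    (g1 : MultilinearMap k (fun _ : Fin (m+3) => B) N)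
    (h1 : MultilinearMap k (fun _ : Fin (m+2) => A) N)
    (f2 : MultilinearMap k (fun _ : Fin (m+2) => A) M)
    (g2 : MultilinearMap k (fun _ : Fin (m+2) => B) N)
    (h2 : MultilinearMap k (fun _ : Fin (m+1) => A) N)
    (hcocycle : DNjM (⇑PA) (⇑PB) (⇑PM) (⇑PN) (actL ρM) (actR ρM) (actL ρN) (actR ρN)
        (⇑φ) (⇑ψ) (m+1) ((⇑f1, ⇑g1, ⇑h1), (⇑f2, ⇑g2, ⇑h2)) = 0) :
    ∃ (f1' : MultilinearMap k (fun _ : Fin (m+2) => A) M)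
      (g1' : MultilinearMap k (fun _ : Fin (m+2) => B) N)
      (h1' : MultilinearMap k (fun _ : Fin (m+1) => A) N)
      (f2' : MultilinearMap k (fun _ : Fin (m+1) => A) M)
      (g2' : MultilinearMap k (fun _ : Fin (m+1) => B) N)
      (h2' : MultilinearMap k (fun _ : Fin m => A) N),
      DNjM (⇑PA) (⇑PB) (⇑PM) (⇑PN) (actL ρM) (actR ρM) (actL ρN) (actR ρN)
        (⇑φ) (⇑ψ) m ((⇑f1', ⇑g1', ⇑h1'), (⇑f2', ⇑g2', ⇑h2'))
        = ((⇑f1, ⇑g1, ⇑h1), (⇑f2, ⇑g2, ⇑h2))  := by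
  classical
  -- signs
  set c : ℤ := (-1) ^ m with hcdef
  have hc2 : c * c = 1 := by
    rw [hcdef, ← pow_add]; exact Even.neg_one_pow ⟨m, rfl⟩
  have s2 : ((-1 : ℤ)) ^ (m + 2) = c := by
    rw [show m + 2 = m + 1 + 1 from rfl, pow_succ, pow_succ, ← hcdef]; ring
  have s3 : ((-1 : ℤ)) ^ (m + 3) = -c := by
    rw [show m + 3 = m + 2 + 1 from rfl, pow_succ, s2]; ring
  -- normalize the cocycle hypothesis
  simp only [DNjM, Prod.mk_eq_zero, show m + 1 + 2 = m + 3 from rfl] at hcocycle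
  obtain ⟨⟨e1, e2, e3⟩, e4, e5, e6⟩ := hcocycle
  -- linearity facts
  have lMz : ∀ (t : ℤ) (a : A) (u : M), actL ρM a (t • u) = t • actL ρM a u := by
    intros; simp [actL]
  have rMz : ∀ (t : ℤ) (a : A) (u : M), actR ρM a (t • u) = t • actR ρM a u := by
    intros; simp [actR]
  have lMsub : ∀ (a : A) (u u' : M), actL ρM a (u - u') = actL ρM a u - actL ρM a u' := by
    intros; simp [actL]
  have rMsub : ∀ (a : A) (u u' : M), actR ρM a (u - u') = actR ρM a u - actR ρM a u' := by
    intros; simp [actR]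
  have PMz : ∀ (t : ℤ) (u : M), PM (t • u) = t • PM u := by intros; simp
  have PMsub : ∀ (u u' : M), PM (u - u') = PM u - PM u' := by intros; simp
  have lNz : ∀ (t : ℤ) (a : B) (u : N), actL ρN a (t • u) = t • actL ρN a u := by
    intros; simp [actL]
  have rNz : ∀ (t : ℤ) (a : B) (u : N), actR ρN a (t • u) = t • actR ρN a u := by
    intros; simp [actR]
  have PNz : ∀ (t : ℤ) (u : N), PN (t • u) = t • PN u := by intros; simp
  have PNsub : ∀ (u u' : N), PN (u - u') = PN u - PN u' := by intros; simp
  have lfz : ∀ (t : ℤ) (a : A) (u : N), ρN.l (φ a) (t • u) = t • ρN.l (φ a) u := by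
    intros; simp
  have rfz : ∀ (t : ℤ) (a : A) (u : N), ρN.r (φ a) (t • u) = t • ρN.r (φ a) u := by
    intros; simp
  have lfsub : ∀ (a : A) (u u' : N), ρN.l (φ a) (u - u') = ρN.l (φ a) u - ρN.l (φ a) u' := by
    intros; simp
  have rfsub : ∀ (a : A) (u u' : N), ρN.r (φ a) (u - u') = ρN.r (φ a) u - ρN.r (φ a) u' := by
    intros; simp
  -- bridge between the two forms of the `A`-module structure on `N`
  have brL : (fun (a : A) (nn : N) => actL ρN (φ a) nn) = (fun a nn => ρN.l (φ a) nn) := rfl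
  have brR : (fun (a : A) (nn : N) => actR ρN (φ a) nn) = (fun a nn => ρN.r (φ a) nn) := rfl
  rw [brL, brR] at e3 e6
  -- commutation of ψ with the differentials
  have cM : ∀ (n : ℕ) (f : (Fin n → A) → M) (x : Fin (n+1) → A),
      hochd (· * ·) (fun a nn => ρN.l (φ a) nn) (fun a nn => ρN.r (φ a) nn) n
          (fun y => ψ (f y)) x
        = ψ (hochd (· * ·) (actL ρM) (actR ρM) n f x) := by
    intro n f x
    exact (hochd_comm ψ.toAddMonoidHom (· * ·) (actL ρM) (actR ρM)
      (fun a nn => ρN.l (φ a) nn) (fun a nn => ρN.r (φ a) nn)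
      (fun a u => by simp [actL, hψl]) (fun a u => by simp [actR, hψr]) n f x).symm
  have cMn : ∀ (n : ℕ) (f : (Fin n → A) → M) (x : Fin (n+1) → A),
      njod (· * ·) (⇑PA) (fun a nn => ρN.l (φ a) nn) (fun a nn => ρN.r (φ a) nn) (⇑PN) n
          (fun y => ψ (f y)) x
        = ψ (njod (· * ·) (⇑PA) (actL ρM) (actR ρM) (⇑PM) n f x) := by
    intro n f x
    exact (njod_comm ψ.toAddMonoidHom (· * ·) (⇑PA) (actL ρM) (actR ρM)
      (fun a nn => ρN.l (φ a) nn) (fun a nn => ρN.r (φ a) nn) (⇑PM) (⇑PN)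
      (fun a u => by simp [actL, hψl]) (fun a u => by simp [actR, hψr])
      (fun u => hψP u) n f x).symm
  have cMp : ∀ (n : ℕ) (f : (Fin n → A) → M) (x : Fin n → A),
      Phi (⇑PA) (⇑PN) n (fun y => ψ (f y)) x = ψ (Phi (⇑PA) (⇑PM) n f x) := by
    intro n f x
    exact (Phi_comm ψ.toAddMonoidHom (⇑PA) (⇑PM) (⇑PN) (fun u => hψP u) n f x).symm
  -- compatibility with φ
  have hmul : ∀ a b : A, φ (a * b) = φ a * φ b := fun a b => map_mul φ a b
  have hdg : ∀ a b : A, φ (dmulG (· * ·) (⇑PA) a b) = dmulG (· * ·) (⇑PB) (φ a) (φ b) := by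
    intro a b; simp [dmulG, hφ, map_mul, map_add, map_sub]
  have cB : ∀ (n : ℕ) (f : (Fin n → B) → N) (x : Fin (n+1) → A),
      hochd (· * ·) (fun a nn => ρN.l (φ a) nn) (fun a nn => ρN.r (φ a) nn) n
          (fun y => f (fun i => φ (y i))) x
        = hochd (· * ·) (actL ρN) (actR ρN) n f (fun i => φ (x i)) := by
    intro n f x
    exact (hochd_comp (⇑φ) (· * ·) (· * ·) hmul (actL ρN) (actR ρN) n f x).symm
  have cBn : ∀ (n : ℕ) (f : (Fin n → B) → N) (x : Fin (n+1) → A),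
      njod (· * ·) (⇑PA) (fun a nn => ρN.l (φ a) nn) (fun a nn => ρN.r (φ a) nn) (⇑PN) n
          (fun y => f (fun i => φ (y i))) x
        = njod (· * ·) (⇑PB) (actL ρN) (actR ρN) (⇑PN) n f (fun i => φ (x i)) := by
    intro n f x
    exact (njod_comp (⇑φ) (· * ·) (· * ·) hmul (⇑PA) (⇑PB) hdg (fun a => hφ a)
      (actL ρN) (actR ρN) (⇑PN) n f x).symm
  have cBp : ∀ (n : ℕ) (f : (Fin n → B) → N) (x : Fin n → A),
      Phi (⇑PA) (⇑PN) n (fun y => f (fun i => φ (y i))) x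
        = Phi (⇑PB) (⇑PN) n f (fun i => φ (x i)) := by
    intro n f x
    exact (Phi_comp (⇑φ) (⇑PA) (⇑PB) (fun a => hφ a) (⇑PN) n f x).symm
  -- Step A : the `(A, M)` part
  have hAMc : DNjA (· * ·) (⇑PA) (actL ρM) (actR ρM) (⇑PM) (m+2) (⇑f1, ⇑((-c) • f2)) = 0 := by
    have hcoe : (⇑((-c) • f2) : (Fin (m+2) → A) → M) = fun y => (-c) • f2 y := by
      funext y; simp
    simp only [DNjA, hcoe, Prod.mk_eq_zero, show m + 2 + 1 = m + 3 from rfl]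
    refine ⟨e1, ?_⟩
    funext x
    simp only [Pi.zero_apply]
    have h4 := congrFun e4 x
    simp only [Pi.zero_apply] at h4
    rw [s3, neg_smul] at h4
    have hn := solve4 h4
    rw [njod_zsmul (· * ·) (⇑PA) (actL ρM) (actR ρM) (⇑PM) (-c)
      (fun a u => lMz (-c) a u) (fun a u => rMz (-c) a u) (fun u => PMz (-c) u)
      (m+2) (⇑f2) x, hn]
    rw [smul_smul, neg_mul, hc2, neg_smul, one_smul, neg_neg]
    abel
  obtain ⟨v1, v2, hv⟩ := hAM f1 ((-c) • f2) hAMc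
  simp only [DNjA, Prod.mk.injEq, MultilinearMap.coe_smul] at hv
  obtain ⟨hv1, hv2⟩ := hv
  have hv2' : ∀ x : Fin (m+2) → A,
      njod (· * ·) (⇑PA) (actL ρM) (actR ρM) (⇑PM) (m+1) (⇑v2) x
        = -Phi (⇑PA) (⇑PM) (m+2) (⇑v1) x + c • f2 x := by
    intro x
    have h := congrFun hv2 x
    simp only [Pi.smul_apply, neg_smul] at h
    exact solve1 h
  -- Step B : the `(B, N)` part
  have hBNc : DNjA (· * ·) (⇑PB) (actL ρN) (actR ρN) (⇑PN) (m+2) (⇑g1, ⇑((-c) • g2)) = 0 := by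
    have hcoe : (⇑((-c) • g2) : (Fin (m+2) → B) → N) = fun y => (-c) • g2 y := by
      funext y; simp
    simp only [DNjA, hcoe, Prod.mk_eq_zero, show m + 2 + 1 = m + 3 from rfl]
    refine ⟨e2, ?_⟩
    funext x
    simp only [Pi.zero_apply]
    have h5 := congrFun e5 x
    simp only [Pi.zero_apply] at h5
    rw [s3, neg_smul] at h5
    have hn := solve4 h5
    rw [njod_zsmul (· * ·) (⇑PB) (actL ρN) (actR ρN) (⇑PN) (-c)
      (fun a u => lNz (-c) a u) (fun a u => rNz (-c) a u) (fun u => PNz (-c) u)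
      (m+2) (⇑g2) x, hn]
    rw [smul_smul, neg_mul, hc2, neg_smul, one_smul, neg_neg]
    abel
  obtain ⟨w1, w2, hw⟩ := hBN g1 ((-c) • g2) hBNc
  simp only [DNjA, Prod.mk.injEq, MultilinearMap.coe_smul] at hw
  obtain ⟨hw1, hw2⟩ := hw
  have hw2' : ∀ x : Fin (m+2) → B,
      njod (· * ·) (⇑PB) (actL ρN) (actR ρN) (⇑PN) (m+1) (⇑w2) x
        = -Phi (⇑PB) (⇑PN) (m+2) (⇑w1) x + c • g2 x := by
    intro x
    have h := congrFun hw2 x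
    simp only [Pi.smul_apply, neg_smul] at h
    exact solve1 h
  -- Step C : the `(A, N)` part
  set U1 : MultilinearMap k (fun _ : Fin (m+2) => A) N :=
    ψ.compMultilinearMap v1 - w1.compLinearMap (fun _ => φ.toLinearMap) - h1 with hU1def
  set K2 : MultilinearMap k (fun _ : Fin (m+1) => A) N :=
    c • (ψ.compMultilinearMap v2 - w2.compLinearMap (fun _ => φ.toLinearMap)) - h2 with hK2def
  have hU1coe : (⇑U1 : (Fin (m+2) → A) → N)
      = fun x => ψ (v1 x) - w1 (fun i => φ (x i)) - h1 x := by
    funext x; simp [hU1def]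
  have hK2coe : (⇑K2 : (Fin (m+1) → A) → N)
      = fun x => c • (ψ (v2 x) - w2 (fun i => φ (x i))) - h2 x := by
    funext x; simp [hK2def, smul_sub]
  have hK2c : (⇑(c • K2) : (Fin (m+1) → A) → N) = fun y => c • K2 y := by
    funext y; simp
  have h6' : ∀ x : Fin (m+2) → A,
      njod (· * ·) (⇑PA) (fun a nn => ρN.l (φ a) nn) (fun a nn => ρN.r (φ a) nn) (⇑PN)
          (m+1) (⇑h2) x
        = ψ (f2 x) - g2 (fun i => φ (x i)) - c • Phi (⇑PA) (⇑PN) (m+2) (⇑h1) x := by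
    intro x
    have h := congrFun e6 x
    simp only [Pi.zero_apply, s3, neg_smul] at h
    exact solve2 h
  have hANc : DNjA (· * ·) (⇑PA) (fun a nn => ρN.l (φ a) nn) (fun a nn => ρN.r (φ a) nn)
      (⇑PN) (m+1) (⇑U1, ⇑(c • K2)) = 0 := by
    simp only [DNjA, Prod.mk_eq_zero]
    constructor
    · funext x
      simp only [Pi.zero_apply]
      rw [hU1coe]
      rw [hochd_sub (· * ·) (fun a nn => ρN.l (φ a) nn) (fun a nn => ρN.r (φ a) nn)
        lfsub rfsub (m+2) (fun y => ψ (v1 y) - w1 (fun i => φ (y i))) (⇑h1) x]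
      rw [hochd_sub (· * ·) (fun a nn => ρN.l (φ a) nn) (fun a nn => ρN.r (φ a) nn)
        lfsub rfsub (m+2) (fun y => ψ (v1 y)) (fun y => w1 (fun i => φ (y i))) x]
      rw [cM (m+2) (⇑v1) x, cB (m+2) (⇑w1) x, hv1, hw1]
      have h3 := congrFun e3 x
      simp only [Pi.zero_apply] at h3
      exact h3
    · funext x
      simp only [Pi.zero_apply]
      rw [hK2c]
      rw [njod_zsmul (· * ·) (⇑PA) (fun a nn => ρN.l (φ a) nn) (fun a nn => ρN.r (φ a) nn)
        (⇑PN) c (fun a u => lfz c a u) (fun a u => rfz c a u) (fun u => PNz c u)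
        (m+1) (⇑K2) x]
      rw [hK2coe]
      rw [njod_sub (· * ·) (⇑PA) (fun a nn => ρN.l (φ a) nn) (fun a nn => ρN.r (φ a) nn)
        (⇑PN) lfsub rfsub PNsub (m+1)
        (fun y => c • (ψ (v2 y) - w2 (fun i => φ (y i)))) (⇑h2) x]
      rw [njod_zsmul (· * ·) (⇑PA) (fun a nn => ρN.l (φ a) nn) (fun a nn => ρN.r (φ a) nn)
        (⇑PN) c (fun a u => lfz c a u) (fun a u => rfz c a u) (fun u => PNz c u)
        (m+1) (fun y => ψ (v2 y) - w2 (fun i => φ (y i))) x]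
      rw [njod_sub (· * ·) (⇑PA) (fun a nn => ρN.l (φ a) nn) (fun a nn => ρN.r (φ a) nn)
        (⇑PN) lfsub rfsub PNsub (m+1)
        (fun y => ψ (v2 y)) (fun y => w2 (fun i => φ (y i))) x]
      rw [cMn (m+1) (⇑v2) x, cBn (m+1) (⇑w2) x]
      rw [hv2' x, hw2' (fun i => φ (x i)), h6' x]
      rw [hU1coe]
      rw [Phi_sub (⇑PA) (⇑PN) PNsub (m+2)
        (fun y => ψ (v1 y) - w1 (fun i => φ (y i))) (⇑h1) x]
      rw [Phi_sub (⇑PA) (⇑PN) PNsub (m+2)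
        (fun y => ψ (v1 y)) (fun y => w1 (fun i => φ (y i))) x]
      rw [cMp (m+2) (⇑v1) x, cBp (m+2) (⇑w1) x]
      simp only [map_add, map_neg, map_sub, map_zsmul, smul_add, smul_sub, smul_neg,
        smul_smul, hc2, one_smul]
      abel
  obtain ⟨v1', v2', hvp⟩ := hAN U1 (c • K2) hANc
  simp only [DNjA, Prod.mk.injEq] at hvp
  obtain ⟨hp1, hp2⟩ := hvp
  have hp2' : ∀ x : Fin (m+1) → A,
      njod (· * ·) (⇑PA) (fun a nn => ρN.l (φ a) nn) (fun a nn => ρN.r (φ a) nn) (⇑PN)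
          m (⇑v2') x
        = -Phi (⇑PA) (⇑PN) (m+1) (⇑v1') x - c • K2 x := by
    intro x
    have h := congrFun hp2 x
    rw [hK2c] at h
    exact solve3 h
  -- assembling the coboundary
  refine ⟨v1, w1, v1', c • v2, c • w2, (-c) • v2', ?_⟩
  simp only [DNjM, Prod.mk.injEq, brL, brR]
  refine ⟨⟨hv1, hw1, ?_⟩, ?_, ?_, ?_⟩
  · funext x
    rw [hp1, hU1coe]
    exact solve5 _ _ _
  · funext x
    have hcv2 : (⇑(c • v2) : (Fin (m+1) → A) → M) = fun y => c • v2 y := by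
      funext y; simp
    rw [hcv2, njod_zsmul (· * ·) (⇑PA) (actL ρM) (actR ρM) (⇑PM) c
      (fun a u => lMz c a u) (fun a u => rMz c a u) (fun u => PMz c u) (m+1) (⇑v2) x,
      hv2' x, s2]
    rw [smul_add, smul_neg, smul_smul, hc2, one_smul]
    abel
  · funext x
    have hcw2 : (⇑(c • w2) : (Fin (m+1) → B) → N) = fun y => c • w2 y := by
      funext y; simp
    rw [hcw2, njod_zsmul (· * ·) (⇑PB) (actL ρN) (actR ρN) (⇑PN) c
      (fun a u => lNz c a u) (fun a u => rNz c a u) (fun u => PNz c u) (m+1) (⇑w2) x,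
      hw2' x, s2]
    rw [smul_add, smul_neg, smul_smul, hc2, one_smul]
    abel
  · funext x
    have hcv2' : (⇑((-c) • v2') : (Fin m → A) → N) = fun y => (-c) • v2' y := by
      funext y; simp
    rw [hcv2', njod_zsmul (· * ·) (⇑PA) (fun a nn => ρN.l (φ a) nn)
      (fun a nn => ρN.r (φ a) nn) (⇑PN) (-c)
      (fun a u => lfz (-c) a u) (fun a u => rfz (-c) a u) (fun u => PNz (-c) u)
      m (⇑v2') x, hp2' x, s2]
    have hK2x := congrFun hK2coe x
    rw [hK2x]
    simp only [MultilinearMap.coe_smul, Pi.smul_apply, map_zsmul, smul_sub, smul_add,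
      smul_neg, neg_smul, smul_smul, hc2, one_smul, neg_neg]
    abel_nf
    have hs : ((-1 : ℤ)) * ((-1 : ℤ) • c * c) = 1 := by
      simp only [smul_eq_mul]; linear_combination hc2
    rw [smul_smul, hs, one_smul]
end

section
/- Let φ_t : (μ_{A,t}, P_{A,t}) → (μ_{B,t}, P_{B,t}) and φ'_t : (μ'_{A,t}, P'_{A,t}) → (μ'_{B,t}, P'_{B,t}) be two equivalent one-parameter formal deformations of a morphism of Nijenhuis algebras φ : (A, P_A) → (B, P_B), via a formal isomorphism (F_{A,t}, F_{B,t}) with F_{A,0} = id_A and F_{B,0} = id_B. Then their infinitesimals are cohomologous in H^2_NjM(φ,φ): the difference ((μ_{A,1}, μ_{B,1}, φ_1), (P_{A,1}, P_{B,1}, 0)) − ((μ'_{A,1}, μ'_{B,1}, φ'_1), (P'_{A,1}, P'_{B,1}, 0)) equals D^1 applied to the 1-cochain determined by (F_{A,1}, F_{B,1}). -/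
/-- The multiplication on `A[[t]]` (formal power series with coefficients in `A`,
encoded as sequences of coefficients) induced by a formal sum `μ_t = Σ μ_i tⁱ`
of bilinear maps. -/
def seriesMul {k A : Type*} [Field k] [Ring A] [Algebra k A]
    (μ : ℕ → A →ₗ[k] A →ₗ[k] A) (a b : ℕ → A) : ℕ → A :=
  fun n => ∑ p ∈ Finset.HasAntidiagonal.antidiagonal n, ∑ q ∈ Finset.HasAntidiagonal.antidiagonal p.2,
    μ p.1 (a q.1) (b q.2)

/-- The map `A[[t]] → B[[t]]` induced by a formal sum `Σ P_i tⁱ` of linear maps. -/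
def seriesApp {k A B : Type*} [Field k] [AddCommGroup A] [Module k A]
    [AddCommGroup B] [Module k B]
    (Pt : ℕ → A →ₗ[k] B) (a : ℕ → A) : ℕ → B :=
  fun n => ∑ p ∈ Finset.HasAntidiagonal.antidiagonal n, Pt p.1 (a p.2)

/-- A one-parameter formal deformation of a morphism of Nijenhuis algebras
`φ : (A, PA) → (B, PB)`: the deformed structures make `A[[t]]` and `B[[t]]`
into Nijenhuis algebras over `k[[t]]` and `φ_t` into a morphism of Nijenhuis
algebras. -/
structure IsFormalDeformation {k A B : Type*} [Field k] [Ring A] [Algebra k A]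
    [Ring B] [Algebra k B]
    (φ : A →ₐ[k] B) (PA : A →ₗ[k] A) (PB : B →ₗ[k] B)
    (μA : ℕ → A →ₗ[k] A →ₗ[k] A) (PAt : ℕ → A →ₗ[k] A)
    (μB : ℕ → B →ₗ[k] B →ₗ[k] B) (PBt : ℕ → B →ₗ[k] B)
    (φt : ℕ → A →ₗ[k] B) : Prop where
  muA0 : ∀ x y : A, μA 0 x y = x * y
  muB0 : ∀ x y : B, μB 0 x y = x * y
  PA0 : PAt 0 = PA
  PB0 : PBt 0 = PB
  phi0 : ∀ x : A, φt 0 x = φ x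
  assocA : ∀ a b c : ℕ → A,
    seriesMul μA a (seriesMul μA b c) = seriesMul μA (seriesMul μA a b) c
  nijA : ∀ a b : ℕ → A,
    seriesMul μA (seriesApp PAt a) (seriesApp PAt b)
      = seriesApp PAt (seriesMul μA (seriesApp PAt a) b
          + seriesMul μA a (seriesApp PAt b) - seriesApp PAt (seriesMul μA a b))
  assocB : ∀ a b c : ℕ → B,
    seriesMul μB a (seriesMul μB b c) = seriesMul μB (seriesMul μB a b) c
  nijB : ∀ a b : ℕ → B,
    seriesMul μB (seriesApp PBt a) (seriesApp PBt b)
      = seriesApp PBt (seriesMul μB (seriesApp PBt a) b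
          + seriesMul μB a (seriesApp PBt b) - seriesApp PBt (seriesMul μB a b))
  mult : ∀ a b : ℕ → A,
    seriesApp φt (seriesMul μA a b) = seriesMul μB (seriesApp φt a) (seriesApp φt b)
  commP : ∀ a : ℕ → A,
    seriesApp φt (seriesApp PAt a) = seriesApp PBt (seriesApp φt a)

/-- A formal isomorphism `(F_{A,t}, F_{B,t})` from the deformation
`(μA, PAt, μB, PBt, φt)` to the deformation `(μA', PAt', μB', PBt', φt')`. -/
structure IsFormalIso {k A B : Type*} [Field k] [Ring A] [Algebra k A]
    [Ring B] [Algebra k B]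
    (μA : ℕ → A →ₗ[k] A →ₗ[k] A) (PAt : ℕ → A →ₗ[k] A)
    (μB : ℕ → B →ₗ[k] B →ₗ[k] B) (PBt : ℕ → B →ₗ[k] B)
    (φt : ℕ → A →ₗ[k] B)
    (μA' : ℕ → A →ₗ[k] A →ₗ[k] A) (PAt' : ℕ → A →ₗ[k] A)
    (μB' : ℕ → B →ₗ[k] B →ₗ[k] B) (PBt' : ℕ → B →ₗ[k] B)
    (φt' : ℕ → A →ₗ[k] B)
    (F : ℕ → A →ₗ[k] A) (G : ℕ → B →ₗ[k] B) : Prop where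
  F0 : F 0 = LinearMap.id
  G0 : G 0 = LinearMap.id
  FmulA : ∀ a b : ℕ → A,
    seriesApp F (seriesMul μA a b) = seriesMul μA' (seriesApp F a) (seriesApp F b)
  FPA : ∀ a : ℕ → A,
    seriesApp F (seriesApp PAt a) = seriesApp PAt' (seriesApp F a)
  GmulB : ∀ a b : ℕ → B,
    seriesApp G (seriesMul μB a b) = seriesMul μB' (seriesApp G a) (seriesApp G b)
  GPB : ∀ a : ℕ → B,
    seriesApp G (seriesApp PBt a) = seriesApp PBt' (seriesApp G a)
  Gphi : ∀ a : ℕ → A,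
    seriesApp G (seriesApp φt a) = seriesApp φt' (seriesApp F a)

/-! Both deformations are transported into each other by `(F, G)`; reading off the coefficient of
`t¹` of each transport identity on constant series, with `F₀ = id`, `G₀ = id` and equal constant
terms, expresses the difference of the infinitesimals as the coboundary of `(F₁, G₁)`. -/

section SeriesCoefficients

variable {k A B : Type*} [Field k]

section Linear

variable [AddCommGroup A] [Module k A] [AddCommGroup B] [Module k B]

lemma seriesApp_apply_zero (Pt : ℕ → A →ₗ[k] B) (a : ℕ → A) :
    seriesApp Pt a 0 = Pt 0 (a 0) := by
  simp [seriesApp]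

lemma seriesApp_apply_one (Pt : ℕ → A →ₗ[k] B) (a : ℕ → A) :
    seriesApp Pt a 1 = Pt 0 (a 1) + Pt 1 (a 0) := by
  simp [seriesApp, Finset.Nat.antidiagonal_succ]

end Linear

section Multiplicative

variable [Ring A] [Algebra k A]

lemma seriesMul_apply_zero (μ : ℕ → A →ₗ[k] A →ₗ[k] A) (a b : ℕ → A) :
    seriesMul μ a b 0 = μ 0 (a 0) (b 0) := by
  simp [seriesMul]

lemma seriesMul_apply_one (μ : ℕ → A →ₗ[k] A →ₗ[k] A) (a b : ℕ → A) :
    seriesMul μ a b 1 = μ 0 (a 0) (b 1) + μ 0 (a 1) (b 0) + μ 1 (a 0) (b 0) := by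
  simp [seriesMul, Finset.Nat.antidiagonal_succ]

end Multiplicative

end SeriesCoefficients

section FirstOrder

variable {k A B : Type*} [Field k]

lemma first_order_sub_of_seriesApp_comp [AddCommGroup A] [Module k A]
    [AddCommGroup B] [Module k B] {P P' : ℕ → A →ₗ[k] B} {F : ℕ → A →ₗ[k] A}
    {G : ℕ → B →ₗ[k] B} {p : A → B} (hF : F 0 = LinearMap.id) (hG : G 0 = LinearMap.id)
    (hP : ∀ x, P 0 x = p x) (hP' : ∀ x, P' 0 x = p x)
    (hcomp : ∀ a, seriesApp G (seriesApp P a) = seriesApp P' (seriesApp F a)) (x : A) :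
    P 1 x - P' 1 x = p (F 1 x) - G 1 (p x) := by
  have h := congrFun (hcomp (Pi.single 0 x)) 1
  simp only [seriesApp_apply_one, seriesApp_apply_zero, Pi.single_eq_same,
    Pi.single_eq_of_ne one_ne_zero, map_zero] at h
  simp only [hF, hG, hP, hP', LinearMap.id_apply] at h
  linear_combination (norm := abel_nf) h

lemma first_order_sub_of_seriesApp_seriesMul [Ring A] [Algebra k A]
    {μ μ' : ℕ → A →ₗ[k] A →ₗ[k] A} {F : ℕ → A →ₗ[k] A} (hF : F 0 = LinearMap.id)
    (hμ : ∀ x y, μ 0 x y = x * y) (hμ' : ∀ x y, μ' 0 x y = x * y)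
    (hmul : ∀ a b, seriesApp F (seriesMul μ a b) = seriesMul μ' (seriesApp F a) (seriesApp F b))
    (x y : A) :
    μ 1 x y - μ' 1 x y = x * F 1 y - F 1 (x * y) + F 1 x * y := by
  have h := congrFun (hmul (Pi.single 0 x) (Pi.single 0 y)) 1
  simp only [seriesApp_apply_one, seriesApp_apply_zero, seriesMul_apply_one, seriesMul_apply_zero,
    Pi.single_eq_same, Pi.single_eq_of_ne one_ne_zero, map_zero, LinearMap.zero_apply, hF, hμ, hμ',
    mul_zero, add_zero, zero_add, LinearMap.id_apply] at h
  linear_combination (norm := abel_nf) h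

end FirstOrder

section LowDegreeDifferentials

variable {A M : Type*} [AddCommGroup M]

lemma hochd_one_apply (mul : A → A → A) (l r : A → M → M) (f : (Fin 1 → A) → M)
    (x : Fin 2 → A) :
    hochd mul l r 1 f x
      = l (x 0) (f fun _ => x 1) - f (fun _ => mul (x 0) (x 1)) + r (x 1) (f fun _ => x 0) := by
  have hmerge : mergeAt mul (0 : Fin 1) x = fun _ => mul (x 0) (x 1) := by
    funext j
    simp [Fin.fin_one_eq_zero j, mergeAt]
  simp only [hochd, Fin.sum_univ_one, hmerge, Fin.fin_one_eq_zero, Fin.succ_zero_eq_one,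
    Fin.castSucc_zero, Fin.last]
  simp [sub_eq_add_neg]

lemma Phi_one_apply (P : A → A) (PM : M → M) (f : (Fin 1 → A) → M) (x : Fin 1 → A) :
    Phi P PM 1 f x = f (fun i => P (x i)) - PM (f x) := by
  have huniv : (Finset.univ : Finset (Finset (Fin 1))) = {∅, {0}} := by decide
  have hempty : (fun i => if i ∈ (∅ : Finset (Fin 1)) then P (x i) else x i) = x := by simp
  have hfull : (fun i => if i ∈ ({0} : Finset (Fin 1)) then P (x i) else x i)
      = fun i => P (x i) := by
    funext i
    simp [Fin.fin_one_eq_zero i]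
  rw [Phi, huniv, Finset.sum_pair (by decide), hempty, hfull]
  simp [sub_eq_neg_add]

end LowDegreeDifferentials

theorem equivalent_infinitesimals_cohomologous_general {k A B : Type*} [Field k]
    [Ring A] [Algebra k A] [Ring B] [Algebra k B]
    (PA : A →ₗ[k] A)
    (PB : B →ₗ[k] B)
    (φ : A →ₐ[k] B)
    (μA : ℕ → A →ₗ[k] A →ₗ[k] A) (PAt : ℕ → A →ₗ[k] A)
    (μB : ℕ → B →ₗ[k] B →ₗ[k] B) (PBt : ℕ → B →ₗ[k] B)
    (φt : ℕ → A →ₗ[k] B)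
    (hdef : IsFormalDeformation φ PA PB μA PAt μB PBt φt)
    (μA' : ℕ → A →ₗ[k] A →ₗ[k] A) (PAt' : ℕ → A →ₗ[k] A)
    (μB' : ℕ → B →ₗ[k] B →ₗ[k] B) (PBt' : ℕ → B →ₗ[k] B)
    (φt' : ℕ → A →ₗ[k] B)
    (hdef' : IsFormalDeformation φ PA PB μA' PAt' μB' PBt' φt')
    (F : ℕ → A →ₗ[k] A) (G : ℕ → B →ₗ[k] B)
    (hiso : IsFormalIso μA PAt μB PBt φt μA' PAt' μB' PBt' φt' F G) :
    (( (fun x : Fin 2 → A => μA 1 (x 0) (x 1)),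
       (fun x : Fin 2 → B => μB 1 (x 0) (x 1)),
       (fun x : Fin 1 → A => φt 1 (x 0)) ),
     ( (fun x : Fin 1 → A => PAt 1 (x 0)),
       (fun x : Fin 1 → B => PBt 1 (x 0)),
       (0 : (Fin 0 → A) → B) ))
    -
    (( (fun x : Fin 2 → A => μA' 1 (x 0) (x 1)),
       (fun x : Fin 2 → B => μB' 1 (x 0) (x 1)),
       (fun x : Fin 1 → A => φt' 1 (x 0)) ),
     ( (fun x : Fin 1 → A => PAt' 1 (x 0)),
       (fun x : Fin 1 → B => PBt' 1 (x 0)),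
       (0 : (Fin 0 → A) → B) ))
    = D1NjM (⇑PA) (⇑PB) (⇑PA) (⇑PB)
        (fun a m => a * m) (fun a m => m * a)
        (fun b nn => b * nn) (fun b nn => nn * b)
        (⇑φ) (⇑φ)
        (( (fun x : Fin 1 → A => F 1 (x 0)),
           (fun x : Fin 1 → B => G 1 (x 0)),
           (0 : (Fin 0 → A) → B) ),
         ( (0 : (Fin 0 → A) → A), (0 : (Fin 0 → B) → B) )) := by
  have hμA := first_order_sub_of_seriesApp_seriesMul hiso.F0 hdef.muA0 hdef'.muA0 hiso.FmulA
  have hμB := first_order_sub_of_seriesApp_seriesMul hiso.G0 hdef.muB0 hdef'.muB0 hiso.GmulB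
  have hφt := first_order_sub_of_seriesApp_comp hiso.F0 hiso.G0 hdef.phi0 hdef'.phi0 hiso.Gphi
  have hPA := first_order_sub_of_seriesApp_comp hiso.F0 hiso.F0
    (LinearMap.congr_fun hdef.PA0) (LinearMap.congr_fun hdef'.PA0) hiso.FPA
  have hPB := first_order_sub_of_seriesApp_comp hiso.G0 hiso.G0
    (LinearMap.congr_fun hdef.PB0) (LinearMap.congr_fun hdef'.PB0) hiso.GPB
  simp only [D1NjM, Prod.mk_sub_mk, Prod.mk.injEq]
  refine ⟨⟨?_, ?_, ?_⟩, ?_, ?_, ?_⟩ <;> funext x <;>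
    simp only [Pi.sub_apply, hochd_one_apply, Phi_one_apply, neg_sub]
  · exact hμA (x 0) (x 1)
  · exact hμB (x 0) (x 1)
  · exact hφt (x 0)
  · exact hPA (x 0)
  · exact hPB (x 0)
  · simp

/-- the infinitesimals of two equivalent one-parameter formal
deformations of a Nijenhuis algebra morphism `φ` are cohomologous in
`H²_NjM(φ,φ)`: their difference is `D¹` of the `1`-cochain determined by
`(F_{A,1}, F_{B,1})`. -/
theorem equivalent_infinitesimals_cohomologous {k A B : Type*} [Field k]
    [Ring A] [Algebra k A] [Ring B] [Algebra k B]
    (PA : A →ₗ[k] A) (hA : IsNijenhuis (⇑PA))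
    (PB : B →ₗ[k] B) (hB : IsNijenhuis (⇑PB))
    (φ : A →ₐ[k] B) (hφ : ∀ x : A, φ (PA x) = PB (φ x))
    (μA : ℕ → A →ₗ[k] A →ₗ[k] A) (PAt : ℕ → A →ₗ[k] A)
    (μB : ℕ → B →ₗ[k] B →ₗ[k] B) (PBt : ℕ → B →ₗ[k] B)
    (φt : ℕ → A →ₗ[k] B)
    (hdef : IsFormalDeformation φ PA PB μA PAt μB PBt φt)
    (μA' : ℕ → A →ₗ[k] A →ₗ[k] A) (PAt' : ℕ → A →ₗ[k] A)
    (μB' : ℕ → B →ₗ[k] B →ₗ[k] B) (PBt' : ℕ → B →ₗ[k] B)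
    (φt' : ℕ → A →ₗ[k] B)
    (hdef' : IsFormalDeformation φ PA PB μA' PAt' μB' PBt' φt')
    (F : ℕ → A →ₗ[k] A) (G : ℕ → B →ₗ[k] B)
    (hiso : IsFormalIso μA PAt μB PBt φt μA' PAt' μB' PBt' φt' F G) :
    (( (fun x : Fin 2 → A => μA 1 (x 0) (x 1)),
       (fun x : Fin 2 → B => μB 1 (x 0) (x 1)),
       (fun x : Fin 1 → A => φt 1 (x 0)) ),
     ( (fun x : Fin 1 → A => PAt 1 (x 0)),
       (fun x : Fin 1 → B => PBt 1 (x 0)),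
       (0 : (Fin 0 → A) → B) ))
    -
    (( (fun x : Fin 2 → A => μA' 1 (x 0) (x 1)),
       (fun x : Fin 2 → B => μB' 1 (x 0) (x 1)),
       (fun x : Fin 1 → A => φt' 1 (x 0)) ),
     ( (fun x : Fin 1 → A => PAt' 1 (x 0)),
       (fun x : Fin 1 → B => PBt' 1 (x 0)),
       (0 : (Fin 0 → A) → B) ))
    = D1NjM (⇑PA) (⇑PB) (⇑PA) (⇑PB)
        (fun a m => a * m) (fun a m => m * a)
        (fun b nn => b * nn) (fun b nn => nn * b)
        (⇑φ) (⇑φ)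
        (( (fun x : Fin 1 → A => F 1 (x 0)),
           (fun x : Fin 1 → B => G 1 (x 0)),
           (0 : (Fin 0 → A) → B) ),
         ( (0 : (Fin 0 → A) → A), (0 : (Fin 0 → B) → B) )) :=
  equivalent_infinitesimals_cohomologous_general PA PB φ μA PAt μB PBt φt hdef μA' PAt' μB' PBt' φt'
    hdef' F G hiso
end

section
/- Let φ : (A, P_A) → (B, P_B) be a morphism of Nijenhuis algebras. Then the mapping ring φ! := A ⊕ B ⊕ Bφ, with multiplication (x + y_1 + y_2φ)(x' + y_1' + y_2'φ) = xx' + y_1y_1' + (y_2φ(x') + y_1y_2')φ, is an associative algebra, and the linear map P_{φ!}(x + y_1 + y_2φ) := P_A(x) + P_B(y_1) + P_B(y_2)φ is a Nijenhuis operator on φ!, so that (φ!, P_{φ!}) is a Nijenhuis algebra. -/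
/-- The multiplication of the mapping ring `φ! = A ⊕ B ⊕ Bφ`:
`(x + y₁ + y₂φ)(x' + y₁' + y₂'φ) = xx' + y₁y₁' + (y₂ φ(x') + y₁ y₂')φ`. -/
def bangMul {A B : Type*} [Ring A] [Ring B] (φ : A → B)
    (u v : A × B × B) : A × B × B :=
  (u.1 * v.1, u.2.1 * v.2.1, u.2.2 * φ v.1 + u.2.1 * v.2.2)

/-- The operator `P_{φ!}(x + y₁ + y₂φ) = PA(x) + PB(y₁) + PB(y₂)φ` on `φ!`. -/
def bangP {A B : Type*} (PA : A → A) (PB : B → B) (u : A × B × B) : A × B × B :=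
  (PA u.1, PB u.2.1, PB u.2.2)

/-- The left action of `φ!` on `ψ! = M ⊕ N ⊕ Nφ`:
`(x + y₁ + y₂φ)(m + n₁ + n₂φ) = xm + y₁n₁ + (y₂ ψ(m) + y₁ n₂)φ`. -/
def bangL {A B M N : Type*} [AddCommGroup N] (φ : A → B) (ψ : M → N)
    (lM : A → M → M) (lN : B → N → N)
    (u : A × B × B) (w : M × N × N) : M × N × N :=
  (lM u.1 w.1, lN u.2.1 w.2.1, lN u.2.2 (ψ w.1) + lN u.2.1 w.2.2)

/-- The right action of `φ!` on `ψ! = M ⊕ N ⊕ Nφ`: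
`(m + n₁ + n₂φ)(x + y₁ + y₂φ) = mx + n₁y₁ + (n₂ φ(x) + n₁ y₂)φ`. -/
def bangR {A B M N : Type*} [AddCommGroup N] (φ : A → B)
    (rM : A → M → M) (rN : B → N → N)
    (u : A × B × B) (w : M × N × N) : M × N × N :=
  (rM u.1 w.1, rN u.2.1 w.2.1, rN (φ u.1) w.2.2 + rN u.2.2 w.2.1)

/-- The operator `P_{ψ!}(m + n₁ + n₂φ) = PM(m) + PN(n₁) + PN(n₂)φ` on `ψ!`. -/
def bangPMod {M N : Type*} (PM : M → M) (PN : N → N) (w : M × N × N) : M × N × N :=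
  (PM w.1, PN w.2.1, PN w.2.2)

/-- The Gerstenhaber–Schack comparison map `τ` in degree `m+1`, sending a triple
`(Γᴬ, Γᴮ, Γᴬᴮ) ∈ Cⁿ_mor(φ, ψ)` to a cochain of `φ!` with values in `ψ!`. -/
def tauMap {A B M N : Type*} [AddCommGroup M] [AddCommGroup N]
    (φ : A → B) (lN : B → N → N) (m : ℕ)
    (GA : (Fin (m+1) → A) → M) (GB : (Fin (m+1) → B) → N)
    (GAB : (Fin m → A) → N)
    (u : Fin (m+1) → A × B × B) : M × N × N :=
  ( GA (fun i => (u i).1),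
    GB (fun i => (u i).2.1),
    (∑ r : Fin (m+1), GB (fun i =>
        if (i : ℕ) < (r : ℕ) then (u i).2.1
        else if i = r then (u i).2.2
        else φ ((u i).1)))
      + lN ((u 0).2.2) (GAB (fun i : Fin m => (u i.succ).1)) )

/-- for a morphism of Nijenhuis algebras `φ : (A,PA) → (B,PB)`, the
mapping ring `φ! = A ⊕ B ⊕ Bφ` is an associative algebra and
`P_{φ!}(x + y₁ + y₂φ) = PA(x) + PB(y₁) + PB(y₂)φ` is a Nijenhuis operator on it,
so `(φ!, P_{φ!})` is a Nijenhuis algebra. -/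
theorem bang_is_nijenhuis_algebra {k A B : Type*} [Field k] [Ring A] [Algebra k A]
    [Ring B] [Algebra k B]
    (PA : A →ₗ[k] A) (hA : IsNijenhuis (⇑PA))
    (PB : B →ₗ[k] B) (hB : IsNijenhuis (⇑PB))
    (φ : A →ₐ[k] B) (hφ : ∀ x : A, φ (PA x) = PB (φ x)) :
    (∀ u v w : A × B × B,
        bangMul (⇑φ) (bangMul (⇑φ) u v) w = bangMul (⇑φ) u (bangMul (⇑φ) v w))
    ∧ (∀ u v : A × B × B,
        bangMul (⇑φ) (bangP (⇑PA) (⇑PB) u) (bangP (⇑PA) (⇑PB) v)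
          = bangP (⇑PA) (⇑PB)
              (bangMul (⇑φ) (bangP (⇑PA) (⇑PB) u) v
                + bangMul (⇑φ) u (bangP (⇑PA) (⇑PB) v)
                - bangP (⇑PA) (⇑PB) (bangMul (⇑φ) u v))) := by
  constructor
  · intro u v w
    simp [bangMul, mul_assoc, add_mul, mul_add, map_mul, add_assoc]
  · rintro ⟨x, y1, y2⟩ ⟨x', y1', y2'⟩
    refine Prod.ext ?_ (Prod.ext ?_ ?_)
    · simpa [bangMul, bangP] using hA x x'
    · simpa [bangMul, bangP] using hB y1 y1'
    · have h1 := hB y2 (φ x')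
      have h2 := hB y1 y2'
      simp only [bangMul, bangP, hφ, Prod.fst_add, Prod.snd_add, Prod.fst_sub, Prod.snd_sub,
        map_add, map_sub]
      rw [h1, h2]
      simp [map_add, map_sub]
      abel
end

section
/- Let φ : (A, P_A) → (B, P_B) be a morphism of Nijenhuis algebras and ⟨(M,P_M),(N,P_N),ψ⟩ a Nijenhuis φ-bimodule. Then ψ! := M ⊕ N ⊕ Nφ with the actions (x+y_1+y_2φ)(m+n_1+n_2φ) = xm + y_1n_1 + (y_2ψ(m)+y_1n_2)φ and (m+n_1+n_2φ)(x+y_1+y_2φ) = mx + n_1y_1 + (n_2φ(x)+n_1y_2)φ is a φ!-bimodule, and the linear map P_{ψ!}(m+n_1+n_2φ) := P_M(m)+P_N(n_1)+P_N(n_2)φ makes (ψ!, P_{ψ!}) a Nijenhuis bimodule over the Nijenhuis algebra (φ!, P_{φ!}). -/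
/-!
On the summands `M` and `N` the identities are axioms of the given bimodules. On the summand `Nφ`,
pushing `ψ` and `φ` inward (`ψ` is an `A`-bimodule map into `N` viewed through `φ`, and
`ψ ∘ PM = PN ∘ ψ`, `φ ∘ PA = PB ∘ φ`) turns both sides into sums of actions of `B` on `N`, and the
identity follows termwise from the bimodule and Nijenhuis-bimodule axioms of `N`.
-/

section MappingBimodule

variable {k A B M N : Type*} [Field k] [Ring A] [Algebra k A] [Ring B] [Algebra k B]
  [AddCommGroup M] [Module k M] [AddCommGroup N] [Module k N]
  (φ : A →ₐ[k] B) (ρM : BimoduleStr k A M) (ρN : BimoduleStr k B N) (ψ : M →ₗ[k] N)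

theorem bangL_bangMul (hψl : ∀ (x : A) (m : M), ψ (ρM.l x m) = ρN.l (φ x) (ψ m))
    (u v : A × B × B) (w : M × N × N) :
    bangL φ ψ (actL ρM) (actL ρN) (bangMul φ u v) w
      = bangL φ ψ (actL ρM) (actL ρN) u (bangL φ ψ (actL ρM) (actL ρN) v w) := by
  simp only [bangL, bangMul, actL, Prod.mk.injEq, true_and, ρM.l_mul, ρN.l_mul, hψl, map_add,
    LinearMap.add_apply]
  abel

theorem bangR_bangMul (u v : A × B × B) (w : M × N × N) :
    bangR φ (actR ρM) (actR ρN) (bangMul φ u v) w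
      = bangR φ (actR ρM) (actR ρN) v (bangR φ (actR ρM) (actR ρN) u w) := by
  simp only [bangR, bangMul, actR, Prod.mk.injEq, true_and, ρM.r_mul, ρN.r_mul, map_mul, map_add,
    LinearMap.add_apply]
  abel

theorem bangR_bangL_comm (hψr : ∀ (x : A) (m : M), ψ (ρM.r x m) = ρN.r (φ x) (ψ m))
    (u v : A × B × B) (w : M × N × N) :
    bangR φ (actR ρM) (actR ρN) v (bangL φ ψ (actL ρM) (actL ρN) u w)
      = bangL φ ψ (actL ρM) (actL ρN) u (bangR φ (actR ρM) (actR ρN) v w) := by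
  simp only [bangL, bangR, actL, actR, Prod.mk.injEq, true_and, ρM.lr, ρN.lr, hψr, map_add]
  abel

variable {φ ρM ρN ψ} {PA : A →ₗ[k] A} {PB : B →ₗ[k] B} {PM : M →ₗ[k] M} {PN : N →ₗ[k] N}

theorem bangL_isNijenhuis (hM : IsNijBimodule PA ρM PM) (hN : IsNijBimodule PB ρN PN)
    (hψP : ∀ m : M, ψ (PM m) = PN (ψ m)) (u : A × B × B) (w : M × N × N) :
    bangL φ ψ (actL ρM) (actL ρN) (bangP PA PB u) (bangPMod PM PN w)
      = bangPMod PM PN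
          (bangL φ ψ (actL ρM) (actL ρN) (bangP PA PB u) w
            + bangL φ ψ (actL ρM) (actL ρN) u (bangPMod PM PN w)
            - bangPMod PM PN (bangL φ ψ (actL ρM) (actL ρN) u w)) := by
  simp only [bangL, bangP, bangPMod, actL, Prod.mk.injEq, true_and, Prod.fst_add, Prod.snd_add,
    Prod.fst_sub, Prod.snd_sub, hψP, hM.1, hN.1, map_add, map_sub]
  abel

theorem bangR_isNijenhuis (hφ : ∀ x : A, φ (PA x) = PB (φ x))
    (hM : IsNijBimodule PA ρM PM) (hN : IsNijBimodule PB ρN PN)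
    (u : A × B × B) (w : M × N × N) :
    bangR φ (actR ρM) (actR ρN) (bangP PA PB u) (bangPMod PM PN w)
      = bangPMod PM PN
          (bangR φ (actR ρM) (actR ρN) u (bangPMod PM PN w)
            + bangR φ (actR ρM) (actR ρN) (bangP PA PB u) w
            - bangPMod PM PN (bangR φ (actR ρM) (actR ρN) u w)) := by
  simp only [bangR, bangP, bangPMod, actR, Prod.mk.injEq, true_and, Prod.fst_add, Prod.snd_add,
    Prod.fst_sub, Prod.snd_sub, hφ, hM.2, hN.2, map_add, map_sub]
  abel

end MappingBimodule

theorem bang_is_nijenhuis_bimodule_general {k A B M N : Type*} [Field k] [Ring A]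
    [Algebra k A] [Ring B] [Algebra k B]
    [AddCommGroup M] [Module k M] [AddCommGroup N] [Module k N]
    (PA : A →ₗ[k] A)
    (PB : B →ₗ[k] B)
    (φ : A →ₐ[k] B) (hφ : ∀ x : A, φ (PA x) = PB (φ x))
    (ρM : BimoduleStr k A M) (PM : M →ₗ[k] M) (hM : IsNijBimodule PA ρM PM)
    (ρN : BimoduleStr k B N) (PN : N →ₗ[k] N) (hN : IsNijBimodule PB ρN PN)
    (ψ : M →ₗ[k] N)
    (hψl : ∀ (x : A) (m : M), ψ (ρM.l x m) = ρN.l (φ x) (ψ m))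
    (hψr : ∀ (x : A) (m : M), ψ (ρM.r x m) = ρN.r (φ x) (ψ m))
    (hψP : ∀ m : M, ψ (PM m) = PN (ψ m)) :
    -- `ψ!` is a bimodule over the associative algebra `φ!`
    (∀ (u v : A × B × B) (w : M × N × N),
        bangL (⇑φ) (⇑ψ) (actL ρM) (actL ρN) (bangMul (⇑φ) u v) w
          = bangL (⇑φ) (⇑ψ) (actL ρM) (actL ρN) u
              (bangL (⇑φ) (⇑ψ) (actL ρM) (actL ρN) v w))
    ∧ (∀ (u v : A × B × B) (w : M × N × N),
        bangR (⇑φ) (actR ρM) (actR ρN) (bangMul (⇑φ) u v) w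
          = bangR (⇑φ) (actR ρM) (actR ρN) v
              (bangR (⇑φ) (actR ρM) (actR ρN) u w))
    ∧ (∀ (u v : A × B × B) (w : M × N × N),
        bangR (⇑φ) (actR ρM) (actR ρN) v
            (bangL (⇑φ) (⇑ψ) (actL ρM) (actL ρN) u w)
          = bangL (⇑φ) (⇑ψ) (actL ρM) (actL ρN) u
              (bangR (⇑φ) (actR ρM) (actR ρN) v w))
    -- and `(ψ!, P_{ψ!})` is a Nijenhuis bimodule over `(φ!, P_{φ!})`
    ∧ (∀ (u : A × B × B) (w : M × N × N),
        bangL (⇑φ) (⇑ψ) (actL ρM) (actL ρN) (bangP (⇑PA) (⇑PB) u)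
            (bangPMod (⇑PM) (⇑PN) w)
          = bangPMod (⇑PM) (⇑PN)
              (bangL (⇑φ) (⇑ψ) (actL ρM) (actL ρN) (bangP (⇑PA) (⇑PB) u) w
                + bangL (⇑φ) (⇑ψ) (actL ρM) (actL ρN) u (bangPMod (⇑PM) (⇑PN) w)
                - bangPMod (⇑PM) (⇑PN)
                    (bangL (⇑φ) (⇑ψ) (actL ρM) (actL ρN) u w)))
    ∧ (∀ (u : A × B × B) (w : M × N × N),
        bangR (⇑φ) (actR ρM) (actR ρN) (bangP (⇑PA) (⇑PB) u)
            (bangPMod (⇑PM) (⇑PN) w)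
          = bangPMod (⇑PM) (⇑PN)
              (bangR (⇑φ) (actR ρM) (actR ρN) u (bangPMod (⇑PM) (⇑PN) w)
                + bangR (⇑φ) (actR ρM) (actR ρN) (bangP (⇑PA) (⇑PB) u) w
                - bangPMod (⇑PM) (⇑PN)
                    (bangR (⇑φ) (actR ρM) (actR ρN) u w))) := by
  exact ⟨bangL_bangMul φ ρM ρN ψ hψl, bangR_bangMul φ ρM ρN, bangR_bangL_comm φ ρM ρN ψ hψr,
    bangL_isNijenhuis hM hN hψP, bangR_isNijenhuis hφ hM hN⟩

/-- for a Nijenhuis `φ`-bimodule `⟨(M,PM),(N,PN),ψ⟩`, the space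
`ψ! = M ⊕ N ⊕ Nφ` with the displayed actions is a `φ!`-bimodule, and
`P_{ψ!}` makes `(ψ!, P_{ψ!})` a Nijenhuis bimodule over `(φ!, P_{φ!})`. -/
theorem bang_is_nijenhuis_bimodule {k A B M N : Type*} [Field k] [Ring A]
    [Algebra k A] [Ring B] [Algebra k B]
    [AddCommGroup M] [Module k M] [AddCommGroup N] [Module k N]
    (PA : A →ₗ[k] A) (hA : IsNijenhuis (⇑PA))
    (PB : B →ₗ[k] B) (hB : IsNijenhuis (⇑PB))
    (φ : A →ₐ[k] B) (hφ : ∀ x : A, φ (PA x) = PB (φ x))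
    (ρM : BimoduleStr k A M) (PM : M →ₗ[k] M) (hM : IsNijBimodule PA ρM PM)
    (ρN : BimoduleStr k B N) (PN : N →ₗ[k] N) (hN : IsNijBimodule PB ρN PN)
    (ψ : M →ₗ[k] N)
    (hψl : ∀ (x : A) (m : M), ψ (ρM.l x m) = ρN.l (φ x) (ψ m))
    (hψr : ∀ (x : A) (m : M), ψ (ρM.r x m) = ρN.r (φ x) (ψ m))
    (hψP : ∀ m : M, ψ (PM m) = PN (ψ m)) :
    -- `ψ!` is a bimodule over the associative algebra `φ!`
    (∀ (u v : A × B × B) (w : M × N × N),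
        bangL (⇑φ) (⇑ψ) (actL ρM) (actL ρN) (bangMul (⇑φ) u v) w
          = bangL (⇑φ) (⇑ψ) (actL ρM) (actL ρN) u
              (bangL (⇑φ) (⇑ψ) (actL ρM) (actL ρN) v w))
    ∧ (∀ (u v : A × B × B) (w : M × N × N),
        bangR (⇑φ) (actR ρM) (actR ρN) (bangMul (⇑φ) u v) w
          = bangR (⇑φ) (actR ρM) (actR ρN) v
              (bangR (⇑φ) (actR ρM) (actR ρN) u w))
    ∧ (∀ (u v : A × B × B) (w : M × N × N),
        bangR (⇑φ) (actR ρM) (actR ρN) v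
            (bangL (⇑φ) (⇑ψ) (actL ρM) (actL ρN) u w)
          = bangL (⇑φ) (⇑ψ) (actL ρM) (actL ρN) u
              (bangR (⇑φ) (actR ρM) (actR ρN) v w))
    -- and `(ψ!, P_{ψ!})` is a Nijenhuis bimodule over `(φ!, P_{φ!})`
    ∧ (∀ (u : A × B × B) (w : M × N × N),
        bangL (⇑φ) (⇑ψ) (actL ρM) (actL ρN) (bangP (⇑PA) (⇑PB) u)
            (bangPMod (⇑PM) (⇑PN) w)
          = bangPMod (⇑PM) (⇑PN)
              (bangL (⇑φ) (⇑ψ) (actL ρM) (actL ρN) (bangP (⇑PA) (⇑PB) u) w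
                + bangL (⇑φ) (⇑ψ) (actL ρM) (actL ρN) u (bangPMod (⇑PM) (⇑PN) w)
                - bangPMod (⇑PM) (⇑PN)
                    (bangL (⇑φ) (⇑ψ) (actL ρM) (actL ρN) u w)))
    ∧ (∀ (u : A × B × B) (w : M × N × N),
        bangR (⇑φ) (actR ρM) (actR ρN) (bangP (⇑PA) (⇑PB) u)
            (bangPMod (⇑PM) (⇑PN) w)
          = bangPMod (⇑PM) (⇑PN)
              (bangR (⇑φ) (actR ρM) (actR ρN) u (bangPMod (⇑PM) (⇑PN) w)
                + bangR (⇑φ) (actR ρM) (actR ρN) (bangP (⇑PA) (⇑PB) u) w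
                - bangPMod (⇑PM) (⇑PN)
                    (bangR (⇑φ) (actR ρM) (actR ρN) u w))) :=
  bang_is_nijenhuis_bimodule_general PA PB φ hφ ρM PM hM ρN PN hN ψ hψl hψr hψP
end
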